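/- Let Λ ⊂ ℝ² be a lattice invariant under the linear map A' = diag(e^γ, e^{−γ}) with γ > 0. Then the three transformations of ℝ³ given by g₁(x,y,θ) = (x+a₁, y+b₁, θ), g₂(x,y,θ) = (x+a₂, y+b₂, θ) (where (a₁,b₁), (a₂,b₂) generate Λ), and g₃(x,y,θ) = (e^γ x, e^{−γ} y, θ+γ) generate a group acting freely and properly discontinuously on ℝ³, satisfying the relations g₃ g_i g₃^{−1} = translation by A'(a_i, b_i) for i = 1, 2. -/

import Mathlib

/-!
Every element of the group generated by `g₁, g₂, g₃` is an affine map
`(x, y, θ) ↦ (e^{nγ} x + u, e^{-nγ} y + v, θ + nγ)` with `n ∈ ℤ` and `(u, v) ∈ Λ`;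
these maps form a group because `Λ` is invariant under every power of `A'`. Such a map
with a fixed point has `n = 0` and then `(u, v) = 0`. If it moves a point of a compact
set `K` into `K`, then `(nγ, u, v)` lies in a compact set determined by `K`, which
contains only finitely many points of the discrete sets `γℤ` and `Λ`.
-/

open Real Set Module

lemma discreteTopology_closure_of_linearIndependent {ι E : Type*} [Fintype ι] [Nonempty ι]
    [NormedAddCommGroup E] [NormedSpace ℝ E] [FiniteDimensional ℝ E] {v : ι → E}
    (hv : LinearIndependent ℝ v) (hcard : Fintype.card ι = finrank ℝ E) :
    DiscreteTopology (AddSubgroup.closure (range v)) := by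
  have h := (Submodule.span_int_eq_addSubgroupClosure (range v)).symm
  rw [← coe_basisOfLinearIndependentOfCardEqFinrank hv hcard] at h ⊢
  rw [h]
  infer_instance

noncomputable def hypScale (t : ℝ) : (ℝ × ℝ) →ₗ[ℝ] ℝ × ℝ :=
  LinearMap.prodMap (exp t • LinearMap.id) (exp (-t) • LinearMap.id)

@[simp]
lemma hypScale_apply (t : ℝ) (v : ℝ × ℝ) :
    hypScale t v = (exp t * v.1, exp (-t) * v.2) := rfl

lemma hypScale_add (s t : ℝ) (v : ℝ × ℝ) :
    hypScale (s + t) v = hypScale s (hypScale t v) := by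
  simp only [hypScale_apply, neg_add, exp_add, Prod.mk.injEq]
  constructor <;> ring

lemma hypScale_zsmul_image {γ : ℝ} {S : Set (ℝ × ℝ)} (h : hypScale γ '' S = S) (n : ℤ) :
    hypScale (n • γ) '' S = S := by
  induction n using Int.induction_on with
  | zero => ext; simp
  | succ n ih =>
    conv_rhs => rw [← ih, ← h, image_image]
    simp only [add_zsmul, one_zsmul, hypScale_add]
  | pred n ih =>
    conv_rhs => rw [← ih]
    conv_lhs => rw [← h, image_image]
    simp only [← hypScale_add, sub_zsmul, one_zsmul, neg_add_cancel_right]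

noncomputable def solMap (t : ℝ) (w : ℝ × ℝ) : Equiv.Perm (ℝ × ℝ × ℝ) where
  toFun p := (exp t * p.1 + w.1, exp (-t) * p.2.1 + w.2, p.2.2 + t)
  invFun q := (exp (-t) * (q.1 - w.1), exp t * (q.2.1 - w.2), q.2.2 - t)
  left_inv p := by simp [← mul_assoc, ← exp_add]
  right_inv q := by simp [← mul_assoc, ← exp_add]

@[simp]
lemma solMap_apply (t : ℝ) (w : ℝ × ℝ) (p : ℝ × ℝ × ℝ) :
    solMap t w p = (exp t * p.1 + w.1, exp (-t) * p.2.1 + w.2, p.2.2 + t) := rfl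

lemma solMap_zero_zero : solMap 0 0 = 1 := by
  ext p <;> simp

lemma solMap_mul (s t : ℝ) (w w' : ℝ × ℝ) :
    solMap s w * solMap t w' = solMap (s + t) (hypScale s w' + w) := by
  ext p <;> simp only [Equiv.Perm.mul_apply, solMap_apply, hypScale_apply, Prod.fst_add,
    Prod.snd_add, neg_add, exp_add] <;> ring

lemma solMap_inv (t : ℝ) (w : ℝ × ℝ) :
    (solMap t w)⁻¹ = solMap (-t) (-hypScale (-t) w) := by
  refine inv_eq_of_mul_eq_one_right ?_
  rw [solMap_mul, add_neg_cancel, map_neg, ← hypScale_add, add_neg_cancel]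
  ext p <;> simp

lemma solMap_conj_translation (t : ℝ) (w : ℝ × ℝ) :
    solMap t 0 * solMap 0 w * (solMap t 0)⁻¹ = solMap 0 (hypScale t w) := by
  rw [solMap_inv, solMap_mul, solMap_mul]
  simp

lemma solMap_eq_one_of_apply_eq {t : ℝ} {w : ℝ × ℝ} {p : ℝ × ℝ × ℝ}
    (h : solMap t w p = p) : solMap t w = 1 := by
  obtain ⟨x, y, θ⟩ := p
  simp only [solMap_apply, Prod.mk.injEq, add_eq_left] at h
  obtain ⟨h₁, h₂, rfl⟩ := h
  simp only [exp_zero, neg_zero, one_mul, add_eq_left] at h₁ h₂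
  rw [show w = 0 from Prod.ext h₁ h₂, solMap_zero_zero]

noncomputable def solParams (p q : ℝ × ℝ × ℝ) : ℝ × (ℝ × ℝ) :=
  (q.2.2 - p.2.2, (q.1, q.2.1) - hypScale (q.2.2 - p.2.2) (p.1, p.2.1))

lemma solParams_solMap_apply (t : ℝ) (w : ℝ × ℝ) (p : ℝ × ℝ × ℝ) :
    solParams p (solMap t w p) = (t, w) := by
  simp [solParams]

lemma continuous_solParams :
    Continuous fun pq : (ℝ × ℝ × ℝ) × (ℝ × ℝ × ℝ) => solParams pq.1 pq.2 := by
  simp only [solParams, hypScale_apply]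
  fun_prop

noncomputable def solLatticeSubgroup (Λ : AddSubgroup (ℝ × ℝ)) {γ : ℝ}
    (hΛ : hypScale γ '' Λ = Λ) : Subgroup (Equiv.Perm (ℝ × ℝ × ℝ)) where
  carrier := {g | ∃ n : ℤ, ∃ w ∈ Λ, solMap (n • γ) w = g}
  mul_mem' := by
    rintro _ _ ⟨m, v, hv, rfl⟩ ⟨n, w, hw, rfl⟩
    refine ⟨m + n, hypScale (m • γ) w + v, Λ.add_mem ?_ hv, by rw [solMap_mul, add_zsmul]⟩
    exact (hypScale_zsmul_image hΛ m).subset ⟨w, hw, rfl⟩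
  one_mem' := ⟨0, 0, Λ.zero_mem, by rw [zero_zsmul, solMap_zero_zero]⟩
  inv_mem' := by
    rintro _ ⟨n, w, hw, rfl⟩
    refine ⟨-n, -hypScale (-n • γ) w, Λ.neg_mem ?_, by rw [solMap_inv, neg_zsmul]⟩
    exact (hypScale_zsmul_image hΛ (-n)).subset ⟨w, hw, rfl⟩

namespace solLatticeSubgroup

variable {Λ : AddSubgroup (ℝ × ℝ)} {γ : ℝ} {hΛ : hypScale γ '' Λ = Λ}

lemma eq_one_of_apply_eq {g : Equiv.Perm (ℝ × ℝ × ℝ)} (hg : g ∈ solLatticeSubgroup Λ hΛ)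
    {p : ℝ × ℝ × ℝ} (hp : g p = p) : g = 1 := by
  obtain ⟨n, w, -, rfl⟩ := hg
  exact solMap_eq_one_of_apply_eq hp

lemma finite_setOf_image_inter_nonempty [DiscreteTopology Λ] (hγ : γ ≠ 0)
    {K : Set (ℝ × ℝ × ℝ)} (hK : IsCompact K) :
    {g | g ∈ solLatticeSubgroup Λ hΛ ∧ (g '' K ∩ K).Nonempty}.Finite := by
  set C := (fun pq : (ℝ × ℝ × ℝ) × (ℝ × ℝ × ℝ) => solParams pq.1 pq.2) '' K ×ˢ K
  have hC : IsCompact C := (hK.prod hK).image continuous_solParams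
  have hT : {n : ℤ | n • γ ∈ Prod.fst '' C}.Finite :=
    tendsto_cofinite_cocompact_iff.mp (Int.tendsto_zmultiplesHom_cofinite hγ) _
      (hC.image continuous_fst)
  have hW : (Prod.snd '' C ∩ Λ).Finite :=
    Metric.finite_isBounded_inter_isClosed DiscreteTopology.isDiscrete
      (hC.image continuous_snd).isBounded AddSubgroup.isClosed_of_discrete
  refine ((hT.prod hW).image fun nw => solMap (nw.1 • γ) nw.2).subset ?_
  rintro _ ⟨⟨n, w, hw, rfl⟩, _, ⟨p, hp, rfl⟩, hq⟩
  have hnw : (n • γ, w) ∈ C := ⟨(p, _), ⟨hp, hq⟩, solParams_solMap_apply _ _ _⟩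
  exact ⟨(n, w), ⟨⟨_, hnw, rfl⟩, ⟨_, hnw, rfl⟩, hw⟩, rfl⟩

end solLatticeSubgroup

/-- Let `Λ ⊂ ℝ²` be a lattice generated by linearly independent vectors `(a₁,b₁)`,
`(a₂,b₂)`, invariant under `A' = diag(e^γ, e^{-γ})` with `γ > 0`. Then the
transformations `g₁(x,y,θ) = (x+a₁, y+b₁, θ)`, `g₂(x,y,θ) = (x+a₂, y+b₂, θ)`,
`g₃(x,y,θ) = (e^γ x, e^{-γ} y, θ+γ)` satisfy `g₃ gᵢ g₃⁻¹ = ` translation by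
`A'(aᵢ, bᵢ)` for `i = 1, 2`, and the group they generate acts freely and properly
discontinuously on `ℝ³`. -/
theorem stmt_15 (γ a₁ b₁ a₂ b₂ : ℝ) (hγ : 0 < γ)
    (hindep : LinearIndependent ℝ ![((a₁, b₁) : ℝ × ℝ), (a₂, b₂)])
    (hΛinv : (fun v : ℝ × ℝ => (Real.exp γ * v.1, Real.exp (-γ) * v.2)) ''
        (AddSubgroup.closure {((a₁, b₁) : ℝ × ℝ), (a₂, b₂)} : AddSubgroup (ℝ × ℝ))
      = (AddSubgroup.closure {((a₁, b₁) : ℝ × ℝ), (a₂, b₂)} : AddSubgroup (ℝ × ℝ)))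
    (g₁ g₂ g₃ : Equiv.Perm (ℝ × ℝ × ℝ))
    (hg₁ : ∀ p : ℝ × ℝ × ℝ, g₁ p = (p.1 + a₁, p.2.1 + b₁, p.2.2))
    (hg₂ : ∀ p : ℝ × ℝ × ℝ, g₂ p = (p.1 + a₂, p.2.1 + b₂, p.2.2))
    (hg₃ : ∀ p : ℝ × ℝ × ℝ, g₃ p = (Real.exp γ * p.1, Real.exp (-γ) * p.2.1, p.2.2 + γ)) :
    (∀ p : ℝ × ℝ × ℝ, (g₃ * g₁ * g₃⁻¹) p
        = (p.1 + Real.exp γ * a₁, p.2.1 + Real.exp (-γ) * b₁, p.2.2)) ∧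
    (∀ p : ℝ × ℝ × ℝ, (g₃ * g₂ * g₃⁻¹) p
        = (p.1 + Real.exp γ * a₂, p.2.1 + Real.exp (-γ) * b₂, p.2.2)) ∧
    (∀ g ∈ Subgroup.closure {g₁, g₂, g₃}, g ≠ 1 → ∀ p : ℝ × ℝ × ℝ, g p ≠ p) ∧
    (∀ K : Set (ℝ × ℝ × ℝ), IsCompact K →
      {g : Equiv.Perm (ℝ × ℝ × ℝ) |
        g ∈ Subgroup.closure {g₁, g₂, g₃} ∧ (g '' K ∩ K).Nonempty}.Finite) := by
  set Λ := AddSubgroup.closure {((a₁, b₁) : ℝ × ℝ), (a₂, b₂)}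
  have hΛ : hypScale γ '' Λ = Λ := hΛinv
  have : DiscreteTopology Λ := by
    have h := discreteTopology_closure_of_linearIndependent hindep (by simp)
    rwa [Matrix.range_cons_cons_empty] at h
  obtain rfl : g₁ = solMap 0 (a₁, b₁) := Equiv.ext fun p => by simp [hg₁]
  obtain rfl : g₂ = solMap 0 (a₂, b₂) := Equiv.ext fun p => by simp [hg₂]
  obtain rfl : g₃ = solMap γ 0 := Equiv.ext fun p => by simp [hg₃]
  have hle : Subgroup.closure {solMap 0 (a₁, b₁), solMap 0 (a₂, b₂), solMap γ 0}
      ≤ solLatticeSubgroup Λ hΛ := by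
    rw [Subgroup.closure_le]
    rintro _ (rfl | rfl | rfl)
    · exact ⟨0, (a₁, b₁), AddSubgroup.subset_closure (by simp), by rw [zero_zsmul]⟩
    · exact ⟨0, (a₂, b₂), AddSubgroup.subset_closure (by simp), by rw [zero_zsmul]⟩
    · exact ⟨1, 0, Λ.zero_mem, by rw [one_zsmul]⟩
  refine ⟨fun p => ?_, fun p => ?_, fun g hg hne p hp => ?_, fun K hK => ?_⟩
  · simp [solMap_conj_translation]
  · simp [solMap_conj_translation]
  · exact hne (solLatticeSubgroup.eq_one_of_apply_eq (hle hg) hp)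
  · exact (solLatticeSubgroup.finite_setOf_image_inter_nonempty hγ.ne' hK).subset
      fun g ⟨hg, hgK⟩ => ⟨hle hg, hgK⟩
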